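/- arXiv:1906.08312 — 2 statements merged into one kernel-verified Lean document; each statement's English description precedes it below -/
import Mathlib

section
/- Let (S, A, T, r) be a finite-state MDP, π a stationary stochastic policy with stationary distribution σ_π, and define the joint distribution ℙ((s,a), s') = T(s'|s,a) π(a|s) σ_π(s). If T̂ is any transition model that is calibrated with respect to ℙ (i.e., ℙ(s' = j | T̂(s'=j | s,a) = p) = p for all j and attained p), then the policy value V̂(π) = E_{s∼σ_π}[r(s)] + γ E_{(s,a)∼ℙ} E_{s'∼T̂(·|s,a)}[V(s')] equals the true value V(π) = E_{s∼σ_π}[r(s)] + γ E_{s'∼ℙ(S')}[V(s')], for any function V : S → ℝ. -/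
open scoped Classical
open Finset

/-- Policy evaluation with calibrated dynamics: in a finite MDP with policy `π`,
stationary distribution `σπ`, true dynamics `T`, and a transition model `That`
calibrated with respect to the joint distribution
`ℙ((s,a),s') = T(s'|s,a) π(a|s) σπ(s)`, the value estimate of the policy under
`That` equals its value under `T`. -/
theorem calibrated_mdp_value_eq
    {S A : Type} [Fintype S] [Fintype A]
    (T : S → A → S → ℝ) (hTnn : ∀ s a s', 0 ≤ T s a s')
    (hTsum : ∀ s a, ∑ s', T s a s' = 1)
    (π : S → A → ℝ) (hπnn : ∀ s a, 0 ≤ π s a) (hπsum : ∀ s, ∑ a, π s a = 1)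
    (σπ : S → ℝ) (hσnn : ∀ s, 0 ≤ σπ s) (hσsum : ∑ s, σπ s = 1)
    (hstat : ∀ s' : S, ∑ s, ∑ a, σπ s * π s a * T s a s' = σπ s')
    (That : S → A → S → ℝ) (hThatnn : ∀ s a s', 0 ≤ That s a s')
    (hThatsum : ∀ s a, ∑ s', That s a s' = 1)
    (hcal : ∀ (j : S) (p : ℝ),
      0 < ∑ q ∈ univ.filter (fun q : S × A => That q.1 q.2 j = p),
            σπ q.1 * π q.1 q.2 →
      ∑ q ∈ univ.filter (fun q : S × A => That q.1 q.2 j = p),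
          σπ q.1 * π q.1 q.2 * T q.1 q.2 j
        = p * ∑ q ∈ univ.filter (fun q : S × A => That q.1 q.2 j = p),
            σπ q.1 * π q.1 q.2)
    (r : S → ℝ) (γ : ℝ) (hγ : γ ∈ Set.Ico (0 : ℝ) 1) (V : S → ℝ) :
    (∑ s, σπ s * r s)
        + γ * ∑ s, ∑ a, ∑ s', σπ s * π s a * That s a s' * V s'
      = (∑ s, σπ s * r s)
        + γ * ∑ s, ∑ a, ∑ s', σπ s * π s a * T s a s' * V s' := by
  have key : ∀ j : S,
      (∑ q : S × A, σπ q.1 * π q.1 q.2 * That q.1 q.2 j)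
        = ∑ q : S × A, σπ q.1 * π q.1 q.2 * T q.1 q.2 j := by
    intro j
    have hmaps : ∀ q : S × A, q ∈ (univ : Finset (S × A)) →
        That q.1 q.2 j ∈ univ.image (fun q : S × A => That q.1 q.2 j) :=
      fun q _ => Finset.mem_image_of_mem _ (mem_univ q)
    rw [← Finset.sum_fiberwise_of_maps_to hmaps
        (fun q : S × A => σπ q.1 * π q.1 q.2 * That q.1 q.2 j),
      ← Finset.sum_fiberwise_of_maps_to hmaps
        (fun q : S × A => σπ q.1 * π q.1 q.2 * T q.1 q.2 j)]
    refine Finset.sum_congr rfl fun p _ => ?_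
    have hlhs : ∑ q ∈ univ.filter (fun q : S × A => That q.1 q.2 j = p),
        σπ q.1 * π q.1 q.2 * That q.1 q.2 j
        = p * ∑ q ∈ univ.filter (fun q : S × A => That q.1 q.2 j = p),
            σπ q.1 * π q.1 q.2 := by
      rw [Finset.mul_sum]
      refine Finset.sum_congr rfl fun q hq => ?_
      have := (Finset.mem_filter.mp hq).2
      rw [this]; ring
    have hw : 0 ≤ ∑ q ∈ univ.filter (fun q : S × A => That q.1 q.2 j = p),
        σπ q.1 * π q.1 q.2 :=
      Finset.sum_nonneg fun q _ => mul_nonneg (hσnn _) (hπnn _ _)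
    rcases hw.lt_or_eq with hpos | hzero
    · rw [hlhs, hcal j p hpos]
    · have hz := hzero.symm
      have hall := (Finset.sum_eq_zero_iff_of_nonneg
        (fun q _ => mul_nonneg (hσnn q.1) (hπnn q.1 q.2))).mp hz
      rw [hlhs, hz, mul_zero]
      refine (Finset.sum_eq_zero fun q hq => ?_).symm
      rw [hall q hq, zero_mul]
  congr 1
  congr 1
  have rearr : ∀ X : S → A → S → ℝ,
      (∑ s, ∑ a, ∑ s', σπ s * π s a * X s a s' * V s')
        = ∑ s', (∑ q : S × A, σπ q.1 * π q.1 q.2 * X q.1 q.2 s') * V s' := by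
    intro X
    simp only [Finset.sum_mul]
    rw [Finset.sum_comm (s := (univ : Finset S)) (t := (univ : Finset (S × A)))
      (f := fun s' (q : S × A) => σπ q.1 * π q.1 q.2 * X q.1 q.2 s' * V s'),
      Fintype.sum_prod_type]
  rw [rearr That, rearr T]
  exact Finset.sum_congr rfl fun j _ => by rw [key j]
end

section
/- In a finite MDP with a calibrated transition model, the expected reward of any finite sequence of actions is estimated correctly: under the assumptions of the calibrated-MDP theorem, for any bounded function G : S → ℝ, E_{(s,a)∼ℙ} E_{s'∼T̂(·|s,a)}[G(s')] = E_{(s,a)∼ℙ} E_{s'∼T(·|s,a)}[G(s')]. -/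
open scoped Classical
open Finset

lemma calibrated_fiber_sum_eq {S A : Type} [Fintype S] [Fintype A]
    (w : S × A → ℝ) (hw : ∀ q, 0 ≤ w q) (f g : S × A → ℝ)
    (hcal : ∀ p : ℝ, 0 < ∑ q ∈ univ.filter (fun q => g q = p), w q →
      ∑ q ∈ univ.filter (fun q => g q = p), w q * f q
        = p * ∑ q ∈ univ.filter (fun q => g q = p), w q) :
    ∑ q, w q * f q = ∑ q, w q * g q := by
  rw [← Finset.sum_fiberwise_of_maps_to (g := g) (t := univ.image g)
    (fun x _ => Finset.mem_image_of_mem g (mem_univ x)),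
    ← Finset.sum_fiberwise_of_maps_to (g := g) (t := univ.image g)
    (fun x _ => Finset.mem_image_of_mem g (mem_univ x)) (f := fun q => w q * g q)]
  refine Finset.sum_congr rfl fun p _ => ?_
  have h2 : ∑ q ∈ univ.filter (fun q => g q = p), w q * g q
      = p * ∑ q ∈ univ.filter (fun q => g q = p), w q := by
    rw [Finset.mul_sum]
    refine Finset.sum_congr rfl fun q hq => ?_
    have := (Finset.mem_filter.mp hq).2
    rw [this]; ring
  rw [h2]
  rcases lt_or_eq_of_le (Finset.sum_nonneg fun q _ => hw q :
      0 ≤ ∑ q ∈ univ.filter (fun q => g q = p), w q) with h | h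
  · exact hcal p h
  · have hz : ∀ q ∈ univ.filter (fun q => g q = p), w q = 0 :=
      (Finset.sum_eq_zero_iff_of_nonneg (fun q _ => hw q)).mp h.symm
    rw [← h, mul_zero]
    exact Finset.sum_eq_zero fun q hq => by rw [hz q hq, zero_mul]

/-- In a finite MDP, a calibrated transition model estimates expectations of
any function of the next state correctly under the stationary joint
distribution `ℙ((s,a),s') = T(s'|s,a) π(a|s) σπ(s)`. -/
theorem calibrated_mdp_expectation_eq
    {S A : Type} [Fintype S] [Fintype A]
    (T : S → A → S → ℝ) (hTnn : ∀ s a s', 0 ≤ T s a s')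
    (hTsum : ∀ s a, ∑ s', T s a s' = 1)
    (π : S → A → ℝ) (hπnn : ∀ s a, 0 ≤ π s a) (hπsum : ∀ s, ∑ a, π s a = 1)
    (σπ : S → ℝ) (hσnn : ∀ s, 0 ≤ σπ s) (hσsum : ∑ s, σπ s = 1)
    (hstat : ∀ s' : S, ∑ s, ∑ a, σπ s * π s a * T s a s' = σπ s')
    (That : S → A → S → ℝ) (hThatnn : ∀ s a s', 0 ≤ That s a s')
    (hThatsum : ∀ s a, ∑ s', That s a s' = 1)
    (hcal : ∀ (j : S) (p : ℝ),
      0 < ∑ q ∈ univ.filter (fun q : S × A => That q.1 q.2 j = p),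
            σπ q.1 * π q.1 q.2 →
      ∑ q ∈ univ.filter (fun q : S × A => That q.1 q.2 j = p),
          σπ q.1 * π q.1 q.2 * T q.1 q.2 j
        = p * ∑ q ∈ univ.filter (fun q : S × A => That q.1 q.2 j = p),
            σπ q.1 * π q.1 q.2)
    (G : S → ℝ) :
    ∑ s, ∑ a, ∑ s', σπ s * π s a * That s a s' * G s'
      = ∑ s, ∑ a, ∑ s', σπ s * π s a * T s a s' * G s' := by
  have key : ∀ j : S,
      ∑ q : S × A, σπ q.1 * π q.1 q.2 * T q.1 q.2 j
        = ∑ q : S × A, σπ q.1 * π q.1 q.2 * That q.1 q.2 j := fun j =>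
    calibrated_fiber_sum_eq (fun q => σπ q.1 * π q.1 q.2)
      (fun q => mul_nonneg (hσnn q.1) (hπnn q.1 q.2))
      (fun q => T q.1 q.2 j) (fun q => That q.1 q.2 j) (hcal j)
  have e : ∀ X : S → A → S → ℝ,
      ∑ s, ∑ a, ∑ s', σπ s * π s a * X s a s' * G s'
        = ∑ s', (∑ q : S × A, σπ q.1 * π q.1 q.2 * X q.1 q.2 s') * G s' := by
    intro X
    rw [← Fintype.sum_prod_type'
      (f := fun s a => ∑ s', σπ s * π s a * X s a s' * G s'),
      Finset.sum_comm]
    exact Finset.sum_congr rfl fun j _ => by rw [Finset.sum_mul]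
  rw [e That, e T]
  exact Finset.sum_congr rfl fun j _ => by rw [key j]
end
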